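/- arXiv:0902.4840 — 2 statements merged into one kernel-verified Lean document; each statement's English description precedes it below -/
import Mathlib

section
/- For every m with 1 ≤ m ≤ n and every element u of the free group F, one has Ψ_{τ_m}(Ψ_{τ_m}(u)) =_R t_m^{-1} u t_m, i.e. π(Ψ_{τ_m}(Ψ_{τ_m}(u))) = π(t_m)^{-1} π(u) π(t_m) in the presented group G. -/
namespace PureHilden

/-- The three symbols `p`, `x`, `y`. -/
inductive Sym : Type
  | p | x | y
  deriving DecidableEq

open Sym

/-- Generators of the free group `F`:  `p_{ij}, x_{ij}, y_{ij}` for `1 ≤ i < j ≤ n`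
and `t_k` for `1 ≤ k ≤ n`. -/
inductive Gen (n : ℕ) : Type
  | pair (s : Sym) (i j : ℕ) (h : 1 ≤ i ∧ i < j ∧ j ≤ n) : Gen n
  | t (k : ℕ) (h : 1 ≤ k ∧ k ≤ n) : Gen n

/-- The free group `F` on the set `S`. -/
abbrev FG (n : ℕ) := FreeGroup (Gen n)

/-- `α_{ij}` (symmetrised: `α_{ji} = α_{ij}`); junk value `1` for invalid indices. -/
def gsym (n : ℕ) (s : Sym) (i j : ℕ) : FG n :=
  if h : 1 ≤ min i j ∧ min i j < max i j ∧ max i j ≤ n then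
    FreeGroup.of (Gen.pair s (min i j) (max i j) h)
  else 1

def P (n i j : ℕ) : FG n := gsym n Sym.p i j
def X (n i j : ℕ) : FG n := gsym n Sym.x i j
def Y (n i j : ℕ) : FG n := gsym n Sym.y i j

def T (n k : ℕ) : FG n :=
  if h : 1 ≤ k ∧ k ≤ n then FreeGroup.of (Gen.t k h) else 1

/-- `1 ≤ k ≤ n`. -/
def Idx (n k : ℕ) : Prop := 1 ≤ k ∧ k ≤ n

/-- `1 ≤ i < j ≤ n`. -/
def Idx2 (n i j : ℕ) : Prop := 1 ≤ i ∧ i < j ∧ j ≤ n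

/-- `(i,j,k)` is a cyclic rotation of a strictly increasing triple. -/
def cyc3 (i j k : ℕ) : Prop := (i < j ∧ j < k) ∨ (j < k ∧ k < i) ∨ (k < i ∧ i < j)

/-- `(i,j,k,l)` is a cyclic rotation of a strictly increasing quadruple. -/
def cyc4 (i j k l : ℕ) : Prop :=
  (i < j ∧ j < k ∧ k < l) ∨ (j < k ∧ k < l ∧ l < i) ∨
  (k < l ∧ l < i ∧ i < j) ∨ (l < i ∧ i < j ∧ j < k)

def c2A : List (Sym × Sym × Sym) :=
  [(p,p,p),(p,y,y),(x,p,p),(x,x,p),(x,y,y),(y,p,p),(y,p,x),(y,y,y)]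
def c2B : List (Sym × Sym × Sym) :=
  [(p,p,p),(p,x,y),(x,p,p),(x,p,x),(x,x,y),(y,p,p),(y,x,y),(y,y,p)]
def c2C : List (Sym × Sym × Sym) :=
  [(p,p,p),(p,x,x),(x,p,p),(x,x,x),(x,y,p),(y,p,p),(y,p,y),(y,x,x)]

/-- The allowed triples `(α,β,γ)` for relation (C2), by cyclic ordering of `(i,j,k)`. -/
def C2ok (i j k : ℕ) (a b c : Sym) : Prop :=
  (i < j ∧ j < k ∧ (a,b,c) ∈ c2A) ∨
  (j < k ∧ k < i ∧ (a,b,c) ∈ c2B) ∨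
  (k < i ∧ i < j ∧ (a,b,c) ∈ c2C)

/-- The relations `R`, encoded as the words `u * v⁻¹` for each relation `u = v`. -/
inductive Rel (n : ℕ) : FG n → Prop
  | cpt {i j k : ℕ} (hij : Idx2 n i j) (hk : Idx n k) :
      Rel n (P n i j * T n k * (T n k * P n i j)⁻¹)
  | ctt {i j : ℕ} (hi : Idx n i) (hj : Idx n j) :
      Rel n (T n i * T n j * (T n j * T n i)⁻¹)
  | cxt {i j k : ℕ} (hij : Idx2 n i j) (hk : Idx n k) (hne : k ≠ i) :
      Rel n (X n i j * T n k * (T n k * X n i j)⁻¹)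
  | cyt {i j k : ℕ} (hij : Idx2 n i j) (hk : Idx n k) (hne : k ≠ j) :
      Rel n (Y n i j * T n k * (T n k * Y n i j)⁻¹)
  | c1 (a b : Sym) {i j k l : ℕ} (hi : Idx n i) (hj : Idx n j) (hk : Idx n k)
      (hl : Idx n l) (hc : cyc4 i j k l) :
      Rel n (gsym n a i j * gsym n b k l * (gsym n b k l * gsym n a i j)⁻¹)
  | c2 (a b c : Sym) {i j k : ℕ} (hi : Idx n i) (hj : Idx n j) (hk : Idx n k)
      (h : C2ok i j k a b c) :
      Rel n (gsym n a i j * (gsym n b i k * gsym n c j k) *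
             (gsym n b i k * gsym n c j k * gsym n a i j)⁻¹)
  | c3 (a b : Sym) {i j k l : ℕ} (hi : Idx n i) (hj : Idx n j) (hk : Idx n k)
      (hl : Idx n l) (hc : cyc4 i j k l) :
      Rel n (gsym n a i k * (P n j k * gsym n b j l * (P n j k)⁻¹) *
             (P n j k * gsym n b j l * (P n j k)⁻¹ * gsym n a i k)⁻¹)
  | mx {i j : ℕ} (hij : Idx2 n i j) :
      Rel n (X n i j * P n i j * T n i * (P n i j * T n i * X n i j)⁻¹)
  | my {i j : ℕ} (hij : Idx2 n i j) :
      Rel n (Y n i j * P n i j * T n j * (P n i j * T n j * Y n i j)⁻¹)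

/-- The presented group `G = ⟨S ∣ R⟩`. -/
abbrev GG (n : ℕ) := FG n ⧸ Subgroup.normalClosure {w : FG n | Rel n w}

/-- The quotient homomorphism `π : F → G`. -/
def piG (n : ℕ) : FG n →* GG n := QuotientGroup.mk' _

/-- The map defining `Φ_{σ_m}` on generators. -/
def phiSigmaMap (n m : ℕ) : Gen n → FG n
  | Gen.pair s i j _ =>
      if i = m ∧ j = m + 1 then
        match s with
        | Sym.p => P n m (m+1)
        | Sym.x => (T n (m+1))⁻¹ * Y n m (m+1) * T n (m+1)
        | Sym.y => X n m (m+1)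
      else if i = m then gsym n s (m+1) j
      else if j = m then gsym n s (m+1) i
      else if i = m + 1 then P n m (m+1) * gsym n s m j * (P n m (m+1))⁻¹
      else if j = m + 1 then P n m (m+1) * gsym n s m i * (P n m (m+1))⁻¹
      else gsym n s i j
  | Gen.t k _ =>
      if k = m then T n (m+1) else if k = m + 1 then T n m else T n k

/-- `Φ_{σ_m} : F → F`. -/
def phiSigma (n m : ℕ) : FG n →* FG n := FreeGroup.lift (phiSigmaMap n m)

/-- The map defining `Ψ_{σ_m}` on generators. -/
def psiSigmaMap (n m : ℕ) : Gen n → FG n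
  | Gen.pair s i j _ =>
      if i = m ∧ j = m + 1 then
        match s with
        | Sym.p => P n m (m+1)
        | Sym.x => Y n m (m+1)
        | Sym.y => T n m * X n m (m+1) * (T n m)⁻¹
      else if i = m then (P n m (m+1))⁻¹ * gsym n s (m+1) j * P n m (m+1)
      else if j = m then (P n m (m+1))⁻¹ * gsym n s (m+1) i * P n m (m+1)
      else if i = m + 1 then gsym n s m j
      else if j = m + 1 then gsym n s m i
      else gsym n s i j
  | Gen.t k _ =>
      if k = m then T n (m+1) else if k = m + 1 then T n m else T n k

/-- `Ψ_{σ_m} : F → F`. -/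
def psiSigma (n m : ℕ) : FG n →* FG n := FreeGroup.lift (psiSigmaMap n m)

/-- The map defining `Φ_{τ_m}` on generators. -/
def phiTauMap (n m : ℕ) : Gen n → FG n
  | Gen.pair s i j _ =>
      match s with
      | Sym.p => P n i j
      | Sym.x => if m = i then (X n i j)⁻¹ * P n i j else X n i j
      | Sym.y => if m = j then (Y n i j)⁻¹ * P n i j else Y n i j
  | Gen.t k _ => T n k

/-- `Φ_{τ_m} : F → F`. -/
def phiTau (n m : ℕ) : FG n →* FG n := FreeGroup.lift (phiTauMap n m)

/-- The map defining `Ψ_{τ_m}` on generators. -/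
def psiTauMap (n m : ℕ) : Gen n → FG n
  | Gen.pair s i j _ =>
      match s with
      | Sym.p => P n i j
      | Sym.x => if m = i then P n i j * (X n i j)⁻¹ else X n i j
      | Sym.y => if m = j then P n i j * (Y n i j)⁻¹ else Y n i j
  | Gen.t k _ => T n k

/-- `Ψ_{τ_m} : F → F`. -/
def psiTau (n m : ℕ) : FG n →* FG n := FreeGroup.lift (psiTauMap n m)

/-!
`Ψ_{τ_m}` fixes every generator except `x_{mj}` and `y_{im}`, and `Ψ_{τ_m}²` conjugates those
two by `p`. The relations (M-x), (M-y) say that they commute with `p t_m`, and `p` commutes with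
`t_m`, so in `G` conjugation by `p` agrees with conjugation by `t_m⁻¹` on them; every other
generator commutes with `t_m` by the (C-·t) relations. Two homomorphisms out of `F` that agree
on generators are equal.
-/

lemma gsym_eq_of {n : ℕ} (s : Sym) {i j : ℕ} (h : Idx2 n i j) :
    gsym n s i j = FreeGroup.of (Gen.pair s i j h) := by
  have hmin : min i j = i := min_eq_left h.2.1.le
  have hmax : max i j = j := max_eq_right h.2.1.le
  simp only [gsym, hmin, hmax]
  exact dif_pos h

lemma T_eq_of {n k : ℕ} (h : Idx n k) : T n k = FreeGroup.of (Gen.t k h) := dif_pos h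

lemma piG_eq_of_rel {n : ℕ} {u v : FG n} (h : Rel n (u * v⁻¹)) : piG n u = piG n v := by
  have h1 : piG n (u * v⁻¹) = 1 :=
    (QuotientGroup.eq_one_iff _).mpr (Subgroup.subset_normalClosure h)
  rwa [map_mul, map_inv, mul_inv_eq_one] at h1

lemma commute_piG_of_rel {n : ℕ} {a b : FG n} (h : Rel n (a * b * (b * a)⁻¹)) :
    Commute (piG n a) (piG n b) := by
  have hab := piG_eq_of_rel h
  rwa [map_mul, map_mul] at hab

lemma mul_mul_inv_eq_inv_mul_mul_of_commute {G : Type*} [Group G] {a b c : G}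
    (hab : Commute a (b * c)) (hbc : Commute b c) : b * a * b⁻¹ = c⁻¹ * a * c :=
  calc b * a * b⁻¹ = c⁻¹ * (b * c * a * (b * c)⁻¹) * c := by rw [hbc.eq]; group
    _ = c⁻¹ * a * c := by rw [hab.symm.mul_inv_cancel]

section psiTau

variable {n m : ℕ}

lemma psiTau_T (k : ℕ) : psiTau n m (T n k) = T n k := by
  by_cases hk : Idx n k
  · conv_lhs => rw [T_eq_of hk]
    rw [psiTau, FreeGroup.lift_apply_of]; rfl
  · have hT : T n k = 1 := dif_neg hk
    rw [hT, map_one]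

lemma psiTau_P {i j : ℕ} (h : Idx2 n i j) : psiTau n m (P n i j) = P n i j := by
  conv_lhs => rw [P, gsym_eq_of _ h]
  rw [psiTau, FreeGroup.lift_apply_of]; rfl

lemma psiTau_X {i j : ℕ} (h : Idx2 n i j) :
    psiTau n m (X n i j) = if m = i then P n i j * (X n i j)⁻¹ else X n i j := by
  conv_lhs => rw [X, gsym_eq_of _ h]
  rw [psiTau, FreeGroup.lift_apply_of]; rfl

lemma psiTau_Y {i j : ℕ} (h : Idx2 n i j) :
    psiTau n m (Y n i j) = if m = j then P n i j * (Y n i j)⁻¹ else Y n i j := by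
  conv_lhs => rw [Y, gsym_eq_of _ h]
  rw [psiTau, FreeGroup.lift_apply_of]; rfl

lemma psiTau_psiTau_X_self {i j : ℕ} (h : Idx2 n i j) :
    psiTau n i (psiTau n i (X n i j)) = P n i j * X n i j * (P n i j)⁻¹ := by
  simp only [psiTau_X h, ↓reduceIte, map_mul, map_inv, psiTau_P h]
  group

lemma psiTau_psiTau_Y_self {i j : ℕ} (h : Idx2 n i j) :
    psiTau n j (psiTau n j (Y n i j)) = P n i j * Y n i j * (P n i j)⁻¹ := by
  simp only [psiTau_Y h, ↓reduceIte, map_mul, map_inv, psiTau_P h]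
  group

lemma piG_psiTau_psiTau_of_fixed {a : FG n} (ha : psiTau n m a = a)
    (hcomm : Commute (piG n (T n m)) (piG n a)) :
    piG n (psiTau n m (psiTau n m a)) = (piG n (T n m))⁻¹ * piG n a * piG n (T n m) := by
  rw [ha, ha, hcomm.inv_mul_cancel]

lemma piG_psiTau_psiTau_X_self {i j : ℕ} (h : Idx2 n i j) :
    piG n (psiTau n i (psiTau n i (X n i j))) =
      (piG n (T n i))⁻¹ * piG n (X n i j) * piG n (T n i) := by
  have hmx : Commute (piG n (X n i j)) (piG n (P n i j) * piG n (T n i)) := by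
    have hx := piG_eq_of_rel (Rel.mx h)
    rw [map_mul, map_mul, map_mul, map_mul] at hx
    exact (mul_assoc _ _ _).symm.trans hx
  have hpt := commute_piG_of_rel (Rel.cpt h (k := i) ⟨h.1, h.2.1.le.trans h.2.2⟩)
  simpa only [psiTau_psiTau_X_self h, map_mul, map_inv]
    using mul_mul_inv_eq_inv_mul_mul_of_commute hmx hpt

lemma piG_psiTau_psiTau_Y_self {i j : ℕ} (h : Idx2 n i j) :
    piG n (psiTau n j (psiTau n j (Y n i j))) =
      (piG n (T n j))⁻¹ * piG n (Y n i j) * piG n (T n j) := by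
  have hmy : Commute (piG n (Y n i j)) (piG n (P n i j) * piG n (T n j)) := by
    have hy := piG_eq_of_rel (Rel.my h)
    rw [map_mul, map_mul, map_mul, map_mul] at hy
    exact (mul_assoc _ _ _).symm.trans hy
  have hpt := commute_piG_of_rel (Rel.cpt h (k := j) ⟨h.1.trans h.2.1.le, h.2.2⟩)
  simpa only [psiTau_psiTau_Y_self h, map_mul, map_inv]
    using mul_mul_inv_eq_inv_mul_mul_of_commute hmy hpt

lemma piG_psiTau_psiTau_of_gen (hm : Idx n m) (g : Gen n) :
    piG n (psiTau n m (psiTau n m (FreeGroup.of g))) =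
      (piG n (T n m))⁻¹ * piG n (FreeGroup.of g) * piG n (T n m) := by
  rcases g with ⟨s, i, j, hij⟩ | ⟨k, hk⟩
  · rcases s with _ | _ | _
    · rw [← gsym_eq_of _ hij]
      exact piG_psiTau_psiTau_of_fixed (psiTau_P hij) (commute_piG_of_rel (Rel.cpt hij hm)).symm
    · rw [← gsym_eq_of _ hij]
      by_cases hmi : m = i
      · subst hmi; exact piG_psiTau_psiTau_X_self hij
      · exact piG_psiTau_psiTau_of_fixed ((psiTau_X hij).trans (if_neg hmi))
          (commute_piG_of_rel (Rel.cxt hij hm hmi)).symm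
    · rw [← gsym_eq_of _ hij]
      by_cases hmj : m = j
      · subst hmj; exact piG_psiTau_psiTau_Y_self hij
      · exact piG_psiTau_psiTau_of_fixed ((psiTau_Y hij).trans (if_neg hmj))
          (commute_piG_of_rel (Rel.cyt hij hm hmj)).symm
  · rw [← T_eq_of hk]
    exact piG_psiTau_psiTau_of_fixed (psiTau_T k) (commute_piG_of_rel (Rel.ctt hm hk))

end psiTau

theorem psiTau_sq_general (n : ℕ) (m : ℕ) (hm : 1 ≤ m ∧ m ≤ n)
    (u : FG n) :
    piG n (psiTau n m (psiTau n m u)) =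
      (piG n (T n m))⁻¹ * piG n u * piG n (T n m) := by
  have hom_eq : (piG n).comp ((psiTau n m).comp (psiTau n m)) =
      (MulAut.conj (piG n (T n m))⁻¹).toMonoidHom.comp (piG n) :=
    FreeGroup.ext_hom _ _ fun g => by
      simpa only [MonoidHom.comp_apply, MulEquiv.coe_toMonoidHom, MulAut.conj_apply, inv_inv]
        using piG_psiTau_psiTau_of_gen hm g
  simpa only [MonoidHom.comp_apply, MulEquiv.coe_toMonoidHom, MulAut.conj_apply, inv_inv]
    using DFunLike.congr_fun hom_eq u

/-- For `1 ≤ m ≤ n` and all `u ∈ F`,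
`Ψ_{τ_m}(Ψ_{τ_m}(u)) =_R t_m⁻¹ u t_m`. -/
theorem psiTau_sq (n : ℕ) (hn : 2 ≤ n) (m : ℕ) (hm : 1 ≤ m ∧ m ≤ n)
    (u : FG n) :
    piG n (psiTau n m (psiTau n m u)) =
      (piG n (T n m))⁻¹ * piG n u * piG n (T n m) :=
  psiTau_sq_general n m hm u

end PureHilden
end

section
/- For all indices 1 ≤ i < j < k ≤ n, in the presented group G the element t_j^{-1} y_{ij} t_j commutes with x_{jk} p_{ij} p_{ik} p_{ij}^{-1}: (t_j^{-1} y_{ij} t_j)(x_{jk} p_{ij} p_{ik} p_{ij}^{-1}) =_R (x_{jk} p_{ij} p_{ik} p_{ij}^{-1})(t_j^{-1} y_{ij} t_j). -/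
/-!
By (M-y) and (C-pt), `t_j⁻¹ y_ij t_j = p_ij y_ij p_ij⁻¹`; by (C2) for `(j,k,i)`, `x_jk`
commutes with `p_ij p_ik`, so `x_jk p_ij p_ik p_ij⁻¹ = p_ij (p_ik x_jk) p_ij⁻¹`. The two
elements are thus the conjugates by `p_ij` of `y_ij` and `p_ik x_jk`, which commute by (C2)
for `(i,j,k)`.
-/

namespace PureHilden

open Sym

theorem inv_mul_mul_eq_mul_mul_inv_of_commute {G : Type*} [Group G] {a b y : G}
    (hab : Commute a b) (hy : Commute y (a * b)) : b⁻¹ * y * b = a * y * a⁻¹ := by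
  calc b⁻¹ * y * b = a * ((a * b)⁻¹ * y * (a * b)) * a⁻¹ := by rw [hab.eq]; group
    _ = a * y * a⁻¹ := by rw [mul_assoc _ y, hy.eq]; group

theorem mul_mul_mul_inv_eq_conj_of_commute {G : Type*} [Group G] {a c x : G}
    (hx : Commute x (a * c)) : x * a * c * a⁻¹ = a * (c * x) * a⁻¹ := by
  rw [mul_assoc x, hx.eq]; group

theorem gsym_comm (n : ℕ) (s : Sym) (i j : ℕ) : gsym n s i j = gsym n s j i := by
  simp only [gsym, min_comm, max_comm]

theorem piG_commute_of_rel {n : ℕ} {u v : FG n} (h : Rel n (u * v * (v * u)⁻¹)) :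
    Commute (piG n u) (piG n v) := by
  have h1 : piG n (u * v * (v * u)⁻¹) = 1 :=
    (QuotientGroup.eq_one_iff _).2 (Subgroup.subset_normalClosure h)
  rwa [map_mul, map_inv, mul_inv_eq_one, map_mul, map_mul] at h1

theorem stmt17_general (n : ℕ) (i j k : ℕ)
    (h : 1 ≤ i ∧ i < j ∧ j < k ∧ k ≤ n) :
    piG n ((T n j)⁻¹ * Y n i j * T n j * (X n j k * P n i j * P n i k * (P n i j)⁻¹)) =
    piG n (X n j k * P n i j * P n i k * (P n i j)⁻¹ * ((T n j)⁻¹ * Y n i j * T n j)) := by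
  obtain ⟨hi, hij, hjk, hkn⟩ := h
  have hIi : Idx n i := ⟨hi, by omega⟩
  have hIj : Idx n j := ⟨by omega, by omega⟩
  have hIk : Idx n k := ⟨by omega, hkn⟩
  have hIij : Idx2 n i j := ⟨hi, hij, hIj.2⟩
  have hCpt : Commute (piG n (P n i j)) (piG n (T n j)) := piG_commute_of_rel (Rel.cpt hIij hIj)
  have hMy : Commute (piG n (Y n i j)) (piG n (P n i j * T n j)) := by
    apply piG_commute_of_rel
    simpa only [mul_assoc] using Rel.my hIij
  have hC2ypx : Commute (piG n (Y n i j)) (piG n (P n i k * X n j k)) :=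
    piG_commute_of_rel (Rel.c2 Sym.y Sym.p Sym.x hIi hIj hIk (Or.inl ⟨hij, hjk, by decide⟩))
  have hC2xpp : Commute (piG n (X n j k)) (piG n (P n i j * P n i k)) := by
    have := piG_commute_of_rel
      (Rel.c2 Sym.x Sym.p Sym.p hIj hIk hIi (Or.inr (Or.inr ⟨hij, hjk, by decide⟩)))
    rwa [gsym_comm n Sym.p j i, gsym_comm n Sym.p k i] at this
  simp only [map_mul, map_inv] at hMy hC2ypx hC2xpp ⊢
  rw [inv_mul_mul_eq_mul_mul_inv_of_commute hCpt hMy, mul_mul_mul_inv_eq_conj_of_commute hC2xpp]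
  exact (hC2ypx.conj _).eq

/-- STATEMENT 17: For `1 ≤ i < j < k ≤ n`, in `G` the element `t_j⁻¹ y_ij t_j`
commutes with `x_jk p_ij p_ik p_ij⁻¹`. -/
theorem stmt17 (n : ℕ) (hn : 2 ≤ n) (i j k : ℕ)
    (h : 1 ≤ i ∧ i < j ∧ j < k ∧ k ≤ n) :
    piG n ((T n j)⁻¹ * Y n i j * T n j * (X n j k * P n i j * P n i k * (P n i j)⁻¹)) =
    piG n (X n j k * P n i j * P n i k * (P n i j)⁻¹ * ((T n j)⁻¹ * Y n i j * T n j)) :=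
  stmt17_general n i j k h

end PureHilden
end
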